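/- arXiv:2207.10647 — 6 statements merged into one kernel-verified Lean document; each statement's English description precedes it below -/
import Mathlib

section
/- Let $V$ be a finite-dimensional real vector space, $\omega: V \to V^*$ an invertible skew-symmetric linear map, and $B: V \to V^*$ a skew-symmetric linear map such that $\mathrm{Id} + (\omega^{-1}B)^2$ is invertible. Then the complex linear map $B + i\omega : V \otimes \mathbb{C} \to V^* \otimes \mathbb{C}$ is invertible and $(B+i\omega)^{-1} = (\omega + B\omega^{-1}B)^{-1}B\omega^{-1} - i(\omega + B\omega^{-1}B)^{-1}$. -/
set_option maxHeartbeats 1000000 in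
/-- For a finite-dimensional real vector space `V` with skew-symmetric
`ω, B : V → V*`, `ω` invertible and `Id + (ω⁻¹B)²` invertible (equivalently,
`C = ω + Bω⁻¹B` invertible, with inverse `Cinv`), the complexified map `B + iω`
is invertible with inverse `Cinv ∘ B ∘ ω⁻¹ - i • Cinv`. -/
theorem coisotropic_dual_inverse_formula
    (V : Type*) [AddCommGroup V] [Module ℝ V] [FiniteDimensional ℝ V]
    (ω B : V →ₗ[ℝ] Module.Dual ℝ V)
    (hωskew : ∀ v w, ω v w = - ω w v)
    (hBskew : ∀ v w, B v w = - B w v)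
    (ωinv : Module.Dual ℝ V →ₗ[ℝ] V)
    (hω1 : ∀ v, ωinv (ω v) = v) (hω2 : ∀ α, ω (ωinv α) = α)
    (hId : Function.Bijective
      (LinearMap.id + (ωinv ∘ₗ B) ∘ₗ (ωinv ∘ₗ B) : V →ₗ[ℝ] V))
    (C : V →ₗ[ℝ] Module.Dual ℝ V) (hC : C = ω + B ∘ₗ ωinv ∘ₗ B)
    (Cinv : Module.Dual ℝ V →ₗ[ℝ] V)
    (hC1 : ∀ v, Cinv (C v) = v) (hC2 : ∀ α, C (Cinv α) = α) :
    ((LinearMap.baseChange ℂ (Cinv ∘ₗ B ∘ₗ ωinv)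
        - Complex.I • LinearMap.baseChange ℂ Cinv) ∘ₗ
      (LinearMap.baseChange ℂ B + Complex.I • LinearMap.baseChange ℂ ω))
      = LinearMap.id ∧
    ((LinearMap.baseChange ℂ B + Complex.I • LinearMap.baseChange ℂ ω) ∘ₗ
      (LinearMap.baseChange ℂ (Cinv ∘ₗ B ∘ₗ ωinv)
        - Complex.I • LinearMap.baseChange ℂ Cinv))
      = LinearMap.id := by
  set D : Module.Dual ℝ V →ₗ[ℝ] V := Cinv ∘ₗ B ∘ₗ ωinv with hD
  -- key commutation: C ∘ ωinv ∘ B = B ∘ ωinv ∘ C pointwise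
  have key : ∀ w : V, C (ωinv (B w)) = B (ωinv (C w)) := by
    intro w
    simp [hC, map_add, hω1, hω2]
  have hcomm : ∀ α, Cinv (B (ωinv α)) = ωinv (B (Cinv α)) := by
    intro α
    have := key (Cinv α)
    rw [hC2] at this
    rw [← this, hC1]
  -- real identities
  have h1 : D ∘ₗ B + Cinv ∘ₗ ω = LinearMap.id := by
    refine LinearMap.ext fun v => ?_
    have hsum : B (ωinv (B v)) + ω v = C v := by simp [hC]; abel
    have : Cinv (B (ωinv (B v)) + ω v) = v := by rw [hsum, hC1]
    simpa [hD, map_add] using this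
  have h2 : D ∘ₗ ω = Cinv ∘ₗ B := by
    refine LinearMap.ext fun v => ?_
    simp [hD, hω1]
  have h3 : B ∘ₗ D + ω ∘ₗ Cinv = LinearMap.id := by
    refine LinearMap.ext fun α => ?_
    have hsum : B (ωinv (B (Cinv α))) + ω (Cinv α) = C (Cinv α) := by
      simp [hC]; abel
    have : B (Cinv (B (ωinv α))) + ω (Cinv α) = α := by
      rw [hcomm, hsum, hC2]
    simpa [hD] using this
  have h4 : ω ∘ₗ D = B ∘ₗ Cinv := by
    refine LinearMap.ext fun α => ?_
    simp [hD, hcomm, hω2]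
  -- base change versions
  have e1 : LinearMap.baseChange ℂ D ∘ₗ LinearMap.baseChange ℂ B
      + LinearMap.baseChange ℂ Cinv ∘ₗ LinearMap.baseChange ℂ ω
      = LinearMap.id := by
    rw [← LinearMap.baseChange_comp, ← LinearMap.baseChange_comp,
      ← LinearMap.baseChange_add, h1, LinearMap.baseChange_id]
  have e2 : LinearMap.baseChange ℂ D ∘ₗ LinearMap.baseChange ℂ ω
      = LinearMap.baseChange ℂ Cinv ∘ₗ LinearMap.baseChange ℂ B := by
    rw [← LinearMap.baseChange_comp, ← LinearMap.baseChange_comp, h2]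
  have e3 : LinearMap.baseChange ℂ B ∘ₗ LinearMap.baseChange ℂ D
      + LinearMap.baseChange ℂ ω ∘ₗ LinearMap.baseChange ℂ Cinv
      = LinearMap.id := by
    rw [← LinearMap.baseChange_comp, ← LinearMap.baseChange_comp,
      ← LinearMap.baseChange_add, h3, LinearMap.baseChange_id]
  have e4 : LinearMap.baseChange ℂ ω ∘ₗ LinearMap.baseChange ℂ D
      = LinearMap.baseChange ℂ B ∘ₗ LinearMap.baseChange ℂ Cinv := by
    rw [← LinearMap.baseChange_comp, ← LinearMap.baseChange_comp, h4]
  constructor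
  · have expand : (LinearMap.baseChange ℂ D - Complex.I • LinearMap.baseChange ℂ Cinv) ∘ₗ
        (LinearMap.baseChange ℂ B + Complex.I • LinearMap.baseChange ℂ ω)
        = LinearMap.baseChange ℂ D ∘ₗ LinearMap.baseChange ℂ B
            + LinearMap.baseChange ℂ Cinv ∘ₗ LinearMap.baseChange ℂ ω := by
      simp only [LinearMap.sub_comp, LinearMap.comp_add, LinearMap.smul_comp,
        LinearMap.comp_smul, smul_smul, e2]
      match_scalars <;> simp [Complex.I_sq]
    rw [expand, e1]
  · refine LinearMap.ext fun x => ?_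
    have c3 := LinearMap.congr_fun e3 x
    have c4 := LinearMap.congr_fun e4 x
    simp only [LinearMap.comp_apply, LinearMap.add_apply, LinearMap.sub_apply,
      LinearMap.smul_apply, LinearMap.id_apply, map_sub, map_smul] at c3 c4 ⊢
    rw [c4]
    conv_rhs => rw [← c3]
    match_scalars <;> simp [Complex.I_sq]
end

section
/- Let $V$ be a finite-dimensional real vector space, $\omega: V \to V^*$ invertible and skew-symmetric, and $B: V \to V^*$ skew-symmetric with $\omega + B\omega^{-1}B$ invertible. Then the block matrix $J = \begin{pmatrix} \omega^{-1}B & \omega^{-1} \\ -\omega - B\omega^{-1}B & -B\omega^{-1} \end{pmatrix}$ acting on $V \oplus V^*$ satisfies $J^2 = -\mathrm{Id}$, i.e. $J$ is a complex structure on $V \oplus V^*$. -/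
/-- the block map
`J(v, α) = (ω⁻¹Bv + ω⁻¹α, -ωv - Bω⁻¹Bv - Bω⁻¹α)` on `V ⊕ V*`
squares to `-Id`, i.e. is a complex structure. -/
theorem doubling_complex_structure_squares_to_neg_id
    (V : Type*) [AddCommGroup V] [Module ℝ V] [FiniteDimensional ℝ V]
    (ω B : V →ₗ[ℝ] Module.Dual ℝ V)
    (hωskew : ∀ v w, ω v w = - ω w v)
    (hBskew : ∀ v w, B v w = - B w v)
    (ωinv : Module.Dual ℝ V →ₗ[ℝ] V)
    (hω1 : ∀ v, ωinv (ω v) = v) (hω2 : ∀ α, ω (ωinv α) = α)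
    (hC : Function.Bijective (ω + B ∘ₗ ωinv ∘ₗ B : V →ₗ[ℝ] Module.Dual ℝ V))
    (J : V × Module.Dual ℝ V → V × Module.Dual ℝ V)
    (hJ : ∀ p, J p = (ωinv (B p.1) + ωinv p.2,
        - ω p.1 - B (ωinv (B p.1)) - B (ωinv p.2))) :
    ∀ p, J (J p) = -p := by
  intro p
  obtain ⟨v, α⟩ := p
  rw [hJ, hJ, Prod.neg_mk]
  simp only [map_add, map_sub, map_neg, hω1, hω2]
  refine Prod.ext ?_ ?_
  · simp only [Prod.fst]
    abel
  · simp only [Prod.snd]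
    abel
end

section
/- Let $V$ be a finite-dimensional real vector space and $\omega, B: V \to V^*$ skew-symmetric with $\omega$ invertible. Then the bilinear form on $V \oplus V^*$ given by the block matrix $\begin{pmatrix} \omega + B\omega^{-1}B & B\omega^{-1} \\ -\omega^{-1}B & -\omega^{-1} \end{pmatrix}$ is skew-symmetric and non-degenerate (a linear symplectic form). -/
/-- the bilinear form on `V ⊕ V*` given by the block matrix
`(ω+Bω⁻¹B, Bω⁻¹; -ω⁻¹B, -ω⁻¹)` is skew-symmetric and non-degenerate. -/
theorem doubling_form_is_symplectic
    (V : Type*) [AddCommGroup V] [Module ℝ V] [FiniteDimensional ℝ V]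
    (ω B : V →ₗ[ℝ] Module.Dual ℝ V)
    (hωskew : ∀ v w, ω v w = - ω w v)
    (hBskew : ∀ v w, B v w = - B w v)
    (ωinv : Module.Dual ℝ V →ₗ[ℝ] V)
    (hω1 : ∀ v, ωinv (ω v) = v) (hω2 : ∀ α, ω (ωinv α) = α)
    (Ω : V × Module.Dual ℝ V → V × Module.Dual ℝ V → ℝ)
    (hΩ : ∀ p q, Ω p q =
      (ω p.1 + B (ωinv (B p.1)) + B (ωinv p.2)) q.1
        + q.2 (- ωinv (B p.1) - ωinv p.2)) :
    (∀ p q, Ω p q = - Ω q p) ∧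
    (∀ p, (∀ q, Ω p q = 0) → p = 0) := by
  have key : ∀ α β : Module.Dual ℝ V, α (ωinv β) = - β (ωinv α) := by
    intro α β
    have h := hωskew (ωinv α) (ωinv β)
    rw [hω2 α, hω2 β] at h
    exact h
  constructor
  · intro p q
    rw [hΩ p q, hΩ q p]
    simp only [LinearMap.add_apply, map_sub, map_neg]
    have a1 := hωskew p.1 q.1
    have a2 : B (ωinv (B p.1)) q.1 = - B (ωinv (B q.1)) p.1 := by
      have h1 := hBskew (ωinv (B p.1)) q.1
      have h2 := hBskew (ωinv (B q.1)) p.1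
      have h3 := key (B q.1) (B p.1)
      linarith
    have a3 : B (ωinv p.2) q.1 = p.2 (ωinv (B q.1)) := by
      have h1 := hBskew (ωinv p.2) q.1
      have h2 := key (B q.1) p.2
      linarith
    have a4 : q.2 (ωinv (B p.1)) = B (ωinv q.2) p.1 := by
      have h1 := hBskew (ωinv q.2) p.1
      have h2 := key (B p.1) q.2
      linarith
    have a5 := key q.2 p.2
    linarith
  · intro p hp
    have h1 : -ωinv (B p.1) - ωinv p.2 = 0 := by
      rw [← Module.forall_dual_apply_eq_zero_iff ℝ]
      intro α
      have := hp (0, α)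
      rw [hΩ] at this
      simpa using this
    have h2 : p.2 = - B p.1 := by
      have := congrArg ω (show ωinv (B p.1) + ωinv p.2 = 0 by
        have := h1; linear_combination (norm := abel) -this)
      rw [map_add, hω2, hω2, map_zero] at this
      linear_combination (norm := abel) this
    have h3 : ωinv p.2 = - ωinv (B p.1) := by
      linear_combination (norm := abel) -h1
    have h4 : ω p.1 = 0 := by
      ext w
      have := hp (w, 0)
      rw [hΩ] at this
      simp only [LinearMap.add_apply, map_sub, map_neg, LinearMap.zero_apply] at this ⊢
      rw [h3, map_neg] at this
      simp only [LinearMap.neg_apply] at this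
      linarith
    have h5 : p.1 = 0 := by
      have := hω1 p.1
      rw [h4, map_zero] at this
      exact this.symm
    have h6 : p.2 = 0 := by rw [h2, h5, map_zero, neg_zero]
    exact Prod.ext h5 h6
end

section
/- Let $(V, \omega)$ be a finite-dimensional symplectic real vector space, $W \subseteq V$ a coisotropic subspace (i.e. $W^{\omega} \subseteq W$, where $W^\omega$ denotes the symplectic orthogonal), and $F$ a skew-symmetric bilinear form on $W$ such that (1) $F$ vanishes whenever one argument is in $W_{iso} := W^{\omega} = \ker(\omega|_W)$, and (2) $\omega + F\omega^{-1}F = 0$ as a bilinear form on $W$ (for any extension of $F$ to a map $W \to V^*$; the expression is independent of the extension). Then the subspace $\mathbf{W} = \{(u, Fu + \omega v) : u \in W,\ v \in W_{iso}\} \subseteq V \oplus V^*$ is Lagrangian with respect to the symplectic form $\omega \oplus (-\omega^{-1})$ on $V \oplus V^*$, where $\omega^{-1}$ denotes the induced symplectic form on $V^*$. -/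
open Module

theorem double_perp_aux {V : Type*} [AddCommGroup V] [Module ℝ V] [FiniteDimensional ℝ V]
    (ω : V →ₗ[ℝ] Module.Dual ℝ V)
    (hωskew : ∀ v w, ω v w = - ω w v)
    (ωinv : Module.Dual ℝ V →ₗ[ℝ] V)
    (hω1 : ∀ v, ωinv (ω v) = v) (hω2 : ∀ α, ω (ωinv α) = α)
    (W : Submodule ℝ V)
    (c : V) (hc : ∀ z, (∀ x ∈ W, ω z x = 0) → ω c z = 0) : c ∈ W := by
  let e : V ≃ₗ[ℝ] Module.Dual ℝ V := LinearEquiv.ofLinear ω ωinv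
      (LinearMap.ext fun α => by rw [LinearMap.comp_apply, hω2, LinearMap.id_apply])
      (LinearMap.ext fun v => by rw [LinearMap.comp_apply, hω1, LinearMap.id_apply])
  have hann : ∀ S : Submodule ℝ V, finrank ℝ S.dualAnnihilator + finrank ℝ S = finrank ℝ V := by
    intro S
    rw [← (Subspace.quotEquivAnnihilator S).finrank_eq]
    exact Submodule.finrank_quotient_add_finrank S
  have hcomap : ∀ S : Submodule ℝ (Module.Dual ℝ V),
      finrank ℝ (S.comap ω) = finrank ℝ S := by
    intro S
    have : S.comap ω = S.comap (e : V →ₗ[ℝ] Module.Dual ℝ V) := rfl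
    rw [this, Submodule.comap_equiv_eq_map_symm]
    exact LinearEquiv.finrank_map_eq e.symm S
  set Wp : Submodule ℝ V := W.dualAnnihilator.comap ω with hWpdef
  have hWp : ∀ z, z ∈ Wp ↔ ∀ x ∈ W, ω z x = 0 := by
    intro z
    simp [hWpdef, Submodule.mem_comap, Submodule.mem_dualAnnihilator]
  set P : Submodule ℝ V := Wp.dualAnnihilator.comap ω with hPdef
  have hP : ∀ z, z ∈ P ↔ ∀ x ∈ Wp, ω z x = 0 := by
    intro z
    simp [hPdef, Submodule.mem_comap, Submodule.mem_dualAnnihilator]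
  have hWP : W ≤ P := by
    intro w hw
    rw [hP]
    intro z hz
    rw [hωskew]
    rw [(hWp z).1 hz w hw]
    ring
  have hfr : finrank ℝ P = finrank ℝ W := by
    have h1 := hann W
    have h2 := hann Wp
    have h3 : finrank ℝ Wp = finrank ℝ W.dualAnnihilator := hcomap _
    have h4 : finrank ℝ P = finrank ℝ Wp.dualAnnihilator := hcomap _
    omega
  have : W = P := Submodule.eq_of_le_of_finrank_le hWP (le_of_eq hfr)
  rw [this]
  exact (hP c).2 fun z hz => hc z ((hWp z).1 hz)

/-- for a coisotropic subspace `W` of a symplectic vector space `(V, ω)`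
and a skew form `F` on `W` vanishing on `W_iso = ker ω|_W` with `ω + Fω⁻¹F = 0` on `W`,
the lift `Wlift = {(u, Fu + ωv) : u ∈ W, v ∈ W_iso}` is Lagrangian in
`(V ⊕ V*, ω ⊕ -ω⁻¹)`. -/
theorem lift_of_coisotropic_is_Lagrangian
    (V : Type*) [AddCommGroup V] [Module ℝ V] [FiniteDimensional ℝ V]
    (ω : V →ₗ[ℝ] Module.Dual ℝ V)
    (hωskew : ∀ v w, ω v w = - ω w v)
    (ωinv : Module.Dual ℝ V →ₗ[ℝ] V)
    (hω1 : ∀ v, ωinv (ω v) = v) (hω2 : ∀ α, ω (ωinv α) = α)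
    (W : Submodule ℝ V)
    (hcoiso : ∀ v : V, (∀ w ∈ W, ω v w = 0) → v ∈ W)
    (F : V →ₗ[ℝ] Module.Dual ℝ V)
    (hFskew : ∀ v ∈ W, ∀ w ∈ W, F v w = - F w v)
    (hFiso : ∀ v, (v ∈ W ∧ ∀ x ∈ W, ω v x = 0) → ∀ w ∈ W, F v w = 0 ∧ F w v = 0)
    (hFC : ∀ u ∈ W, ∀ u' ∈ W, ω u u' + F (ωinv (F u)) u' = 0)
    (Wlift : Set (V × Module.Dual ℝ V))
    (hWlift : Wlift = {p | ∃ u ∈ W, ∃ v, (v ∈ W ∧ ∀ x ∈ W, ω v x = 0) ∧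
        p = (u, F u + ω v)})
    (Ω : V × Module.Dual ℝ V → V × Module.Dual ℝ V → ℝ)
    (hΩ : ∀ p q, Ω p q = ω p.1 q.1 + p.2 (ωinv q.2)) :
    (∀ p ∈ Wlift, ∀ q ∈ Wlift, Ω p q = 0) ∧
    (∀ p, (∀ q ∈ Wlift, Ω p q = 0) → p ∈ Wlift) := by
  -- double orthogonal lemma
  have hperp : ∀ c : V, (∀ z, (∀ x ∈ W, ω z x = 0) → ω c z = 0) → c ∈ W := fun c hc =>
    double_perp_aux ω hωskew ωinv hω1 hω2 W c hc
  -- pairing antisymmetry on the dual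
  have hpair : ∀ α β : Module.Dual ℝ V, α (ωinv β) = - β (ωinv α) := by
    intro α β
    conv_lhs => rw [← hω2 α]
    conv_rhs => rw [← hω2 β]
    exact hωskew _ _
  -- φ u := ωinv (F u) lands in W for u ∈ W
  have hφW : ∀ u ∈ W, ωinv (F u) ∈ W := by
    intro u hu
    apply hperp
    intro z hz
    have hzW : z ∈ W := hcoiso z hz
    have := (hFiso z ⟨hzW, hz⟩ u hu).2
    calc (ω (ωinv (F u))) z = (F u) z := by rw [hω2]
    _ = 0 := this
  constructor
  · -- isotropic
    intro p hp q hq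
    rw [hWlift] at hp hq
    obtain ⟨u, hu, v, ⟨hvW, hv⟩, rfl⟩ := hp
    obtain ⟨u', hu', v', ⟨hvW', hv'⟩, rfl⟩ := hq
    rw [hΩ]
    simp only
    have e1 : ωinv (F u' + ω v') = ωinv (F u') + v' := by rw [map_add, hω1]
    rw [e1]
    have expand : (F u + ω v) (ωinv (F u') + v')
        = F u (ωinv (F u')) + F u v' + ω v (ωinv (F u')) + ω v v' := by
      simp [LinearMap.add_apply, map_add]; ring
    rw [expand]
    have t1 : F u v' = 0 := (hFiso v' ⟨hvW', hv'⟩ u hu).2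
    have t2 : ω v v' = 0 := hv v' hvW'
    have t3 : ω v (ωinv (F u')) = 0 := by
      rw [hωskew]
      have : (ω (ωinv (F u'))) v = (F u') v := by rw [hω2]
      rw [this, (hFiso v ⟨hvW, hv⟩ u' hu').2]
      ring
    have t4 : F u (ωinv (F u')) = - ω u u' := by
      have hskew := hFskew u hu (ωinv (F u')) (hφW u' hu')
      have hc := hFC u' hu' u hu
      have := hωskew u u'
      linarith [hskew, hc, hωskew u' u]
    rw [t1, t2, t3, t4]
    ring
  · -- coisotropic part
    intro p hp
    have hcond : ∀ u ∈ W, ∀ v : V, (v ∈ W ∧ ∀ x ∈ W, ω v x = 0) →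
        ω p.1 u + p.2 (ωinv (F u)) + p.2 v = 0 := by
      intro u hu v hv
      have h := hp (u, F u + ω v) (by rw [hWlift]; exact ⟨u, hu, v, hv, rfl⟩)
      rw [hΩ] at h
      simp only at h
      rw [map_add, hω1, map_add] at h
      linarith
    have hβz : ∀ z : V, (z ∈ W ∧ ∀ x ∈ W, ω z x = 0) → p.2 z = 0 := by
      intro z hz
      have h := hcond 0 (zero_mem W) z hz
      simp at h
      exact h
    have hmain : ∀ u ∈ W, ω p.1 u + p.2 (ωinv (F u)) = 0 := by
      intro u hu
      have h := hcond u hu 0 ⟨zero_mem W, by simp⟩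
      simpa using h
    set a := p.1 with ha
    set b := ωinv p.2 with hb
    have hωb : ω b = p.2 := hω2 p.2
    have hbW : b ∈ W := by
      apply hperp
      intro z hz
      have hzW : z ∈ W := hcoiso z hz
      rw [hωb]
      exact hβz z ⟨hzW, hz⟩
    have hFub : ∀ u ∈ W, F u b = ω a u := by
      intro u hu
      have h := hmain u hu
      have h2 : p.2 (ωinv (F u)) = - F u (ωinv p.2) := hpair p.2 (F u)
      rw [← hb] at h2
      linarith
    have hsiso : ∀ x ∈ W, ω (a + ωinv (F b)) x = 0 := by
      intro x hx
      have h1 : ω a x = F x b := (hFub x hx).symm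
      have h2 : (ω (ωinv (F b))) x = F b x := by rw [hω2]
      have h3 : F x b = - F b x := hFskew x hx b hbW
      rw [map_add, LinearMap.add_apply, h1, h2, h3]
      ring
    have hsW : a + ωinv (F b) ∈ W := hcoiso _ hsiso
    have hφbW : ωinv (F b) ∈ W := hφW b hbW
    have haW : a ∈ W := by
      have : a = (a + ωinv (F b)) - ωinv (F b) := by abel
      rw [this]
      exact Submodule.sub_mem W hsW hφbW
    have hφaW : ωinv (F a) ∈ W := hφW a haW
    set v := b - ωinv (F a) with hvdef
    have hvW : v ∈ W := Submodule.sub_mem W hbW hφaW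
    have hviso : ∀ x ∈ W, ω v x = 0 := by
      intro x hx
      have hφxW : ωinv (F x) ∈ W := hφW x hx
      -- ω a (φ x) = - ω (φ b) (φ x)  since a + φ b ∈ W_iso and φ x ∈ W
      have s1 : ω (a + ωinv (F b)) (ωinv (F x)) = 0 := hsiso (ωinv (F x)) hφxW
      -- ω (φ b) (φ x) = F b (φ x) = - F (φ x) b = ω x b = - ω b x
      have s2 : (ω (ωinv (F b))) (ωinv (F x)) = F b (ωinv (F x)) := by rw [hω2]
      have s3 : F b (ωinv (F x)) = - F (ωinv (F x)) b := hFskew b hbW _ hφxW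
      have s4 : ω x b + F (ωinv (F x)) b = 0 := hFC x hx b hbW
      -- so ω a (φ x) = ω b x
      have s5 : ω a (ωinv (F x)) = (ω b) x := by
        have e := map_add ω a (ωinv (F b))
        have e2 : ω (a + ωinv (F b)) (ωinv (F x))
            = ω a (ωinv (F x)) + (ω (ωinv (F b))) (ωinv (F x)) := by
          rw [map_add, LinearMap.add_apply]
        have hωxb := hωskew x b
        rw [e2] at s1
        rw [s2, s3] at s1
        linarith
      -- F a x = -F x a = - ω(φx) a = ω a (φ x)
      have s6 : (F a) x = ω a (ωinv (F x)) := by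
        have h1 : F a x = - F x a := hFskew a haW x hx
        have h2 : (ω (ωinv (F x))) a = F x a := by rw [hω2]
        have h3 := hωskew a (ωinv (F x))
        linarith
      -- conclude
      have e3 : (ω v) x = (ω b) x - (ω (ωinv (F a))) x := by
        rw [hvdef, map_sub, LinearMap.sub_apply]
      have e4 : (ω (ωinv (F a))) x = F a x := by rw [hω2]
      rw [e3, e4]
      rw [s6, ← s5]
      ring
    rw [hWlift]
    refine ⟨a, haW, v, ⟨hvW, hviso⟩, ?_⟩
    have hsnd : p.2 = F a + ω v := by
      have : ω v = p.2 - F a := by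
        rw [hvdef, map_sub, hω2 (F a), hωb]
      rw [this]
      abel
    rw [ha]
    exact Prod.ext rfl hsnd
end

section
/- With notation as in the previous statement, the Lagrangian subspace $\mathbf{W} = \{(u, Fu + \omega v) : u \in W, v \in W_{iso}\} \subseteq V \oplus V^*$ is invariant under the complex structure $J(u,\alpha) = (\omega^{-1}\alpha, -\omega u)$ on $V \oplus V^*$. -/
/-- the Lagrangian lift `Wlift = {(u, Fu + ωv) : u ∈ W, v ∈ W_iso}` of a
coisotropic brane is invariant under the complex structure `J(u, α) = (ω⁻¹α, -ωu)`. -/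
theorem lift_of_coisotropic_is_J_invariant
    (V : Type*) [AddCommGroup V] [Module ℝ V] [FiniteDimensional ℝ V]
    (ω : V →ₗ[ℝ] Module.Dual ℝ V)
    (hωskew : ∀ v w, ω v w = - ω w v)
    (ωinv : Module.Dual ℝ V →ₗ[ℝ] V)
    (hω1 : ∀ v, ωinv (ω v) = v) (hω2 : ∀ α, ω (ωinv α) = α)
    (W : Submodule ℝ V)
    (hcoiso : ∀ v : V, (∀ w ∈ W, ω v w = 0) → v ∈ W)
    (F : V →ₗ[ℝ] Module.Dual ℝ V)
    (hFskew : ∀ v ∈ W, ∀ w ∈ W, F v w = - F w v)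
    (hFiso : ∀ v, (v ∈ W ∧ ∀ x ∈ W, ω v x = 0) → ∀ w ∈ W, F v w = 0 ∧ F w v = 0)
    (hFC : ∀ u ∈ W, ∀ u' ∈ W, ω u u' + F (ωinv (F u)) u' = 0)
    (Wlift : Set (V × Module.Dual ℝ V))
    (hWlift : Wlift = {p | ∃ u ∈ W, ∃ v, (v ∈ W ∧ ∀ x ∈ W, ω v x = 0) ∧
        p = (u, F u + ω v)})
    (J : V × Module.Dual ℝ V → V × Module.Dual ℝ V)
    (hJ : ∀ p, J p = (ωinv p.2, - ω p.1)) :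
    ∀ p ∈ Wlift, J p ∈ Wlift := by
  subst hWlift
  rintro p ⟨u, hu, v, ⟨hvW, hviso⟩, rfl⟩
  set z : V := ωinv (F u) with hzdef
  -- Step 1 : z ∈ W
  have hz : z ∈ W := by
    by_contra hz
    obtain ⟨χ, hχz, hχW⟩ :=
      Submodule.exists_dual_map_eq_bot_of_notMem hz inferInstance
    set y : V := ωinv χ with hydef
    have hyW0 : ∀ w ∈ W, ω y w = 0 := by
      intro w hw
      have hmem : χ w ∈ W.map χ := Submodule.mem_map_of_mem hw
      rw [hχW, Submodule.mem_bot] at hmem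
      simpa [hydef, hω2] using hmem
    have hyW : y ∈ W := hcoiso y hyW0
    have hFuy' : F u y = 0 := (hFiso y ⟨hyW, hyW0⟩ u hu).2
    have : χ z = 0 := by
      have h1 : ω y z = - ω z y := hωskew y z
      have h2 : ω z y = F u y := by rw [hzdef, hω2]
      have h3 : χ z = ω y z := by rw [hydef, hω2]
      rw [h3, h1, h2, hFuy']
      ring
    exact hχz this
  have hu' : z + v ∈ W := W.add_mem hz hvW
  -- Step 2 : the isotropic correction
  set η : Module.Dual ℝ V := - ω u - F (z + v) with hηdef
  set v' : V := ωinv η with hv'def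
  have hηW : ∀ w ∈ W, η w = 0 := by
    intro w hw
    have hFz : ω u w + F z w = 0 := hFC u hu w hw
    have hFv : F v w = 0 := (hFiso v ⟨hvW, hviso⟩ w hw).1
    have : η w = - ω u w - (F z w + F v w) := by
      simp [hηdef]
    rw [this, hFv]
    linarith
  have hv'iso : ∀ w ∈ W, ω v' w = 0 := by
    intro w hw
    rw [hv'def, hω2]
    exact hηW w hw
  have hv'W : v' ∈ W := hcoiso v' hv'iso
  -- Step 3 : conclude
  rw [hJ]
  refine ⟨z + v, hu', v', ⟨hv'W, hv'iso⟩, ?_⟩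
  have hfst : ωinv (F u + ω v) = z + v := by
    rw [map_add, hω1]
  have hsnd : F (z + v) + ω v' = - ω u := by
    rw [hv'def, hω2, hηdef]
    abel
  simp only [hfst, hsnd]
end

section
/- Let $a > 0$, $b \in \mathbb{R}$, $\tau = b + ia$, and let $u, v \in \mathbb{C}$. Then the following identity of absolutely convergent double series holds: $\sum_{m,n \in \mathbb{Z}} e^{-\frac{\pi}{2a}(n^2\tau\bar\tau + m^2 + 2\tau mn)} e^{-\frac{\pi}{a}(m+n\bar\tau)u} e^{\frac{\pi}{a}(m+n\tau)v} e^{-\frac{\pi}{2a}u^2} e^{\frac{\pi}{a}uv} e^{-\frac{\pi}{2a}v^2} = \sqrt{2a}\, \Big(\sum_{k \in \mathbb{Z}} e^{\pi i \tau k^2} e^{2\pi i k u}\Big)\Big(\sum_{l \in \mathbb{Z}} e^{-\pi i \bar\tau l^2} e^{2\pi i l v}\Big).$ -/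
/-!
Completing the square in `m` (the cross term only contributes `exp (2πi · mn) = 1`, since
`τ - τ̄ = 2ia`) writes each summand as a Gaussian in `m + nτ̄ + u - v` times a factor depending
on `n` alone. Poisson summation in `m` turns the Gaussian sum into `√(2a) ϑ(-(nτ̄ + u - v); 2ia)`,
whose `k`-th term combines with the `n`-factor into `ϑ`-terms of indices `-k` and `n + k`; the shear
`(n, k) ↦ (-k, n + k)` of `ℤ²` then splits the double sum into the product of the two theta
series. The same Poisson formula bounds the `m`-sums of absolute values uniformly in the shift,
which gives absolute convergence.
-/

/-- The Gaussian double-sum term appearing in the Floer product on the twisted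
doubling torus. -/
noncomputable def doubleThetaTerm (a : ℝ) (τ u v : ℂ) (m n : ℤ) : ℂ :=
  Complex.exp (-((Real.pi : ℂ) / (2 * (a : ℂ))) *
      ((n : ℂ) ^ 2 * τ * (starRingEnd ℂ) τ + (m : ℂ) ^ 2 + 2 * τ * (m : ℂ) * (n : ℂ))) *
  Complex.exp (-((Real.pi : ℂ) / (a : ℂ)) * ((m : ℂ) + (n : ℂ) * (starRingEnd ℂ) τ) * u) *
  Complex.exp (((Real.pi : ℂ) / (a : ℂ)) * ((m : ℂ) + (n : ℂ) * τ) * v) *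
  Complex.exp (-((Real.pi : ℂ) / (2 * (a : ℂ))) * u ^ 2) *
  Complex.exp (((Real.pi : ℂ) / (a : ℂ)) * u * v) *
  Complex.exp (-((Real.pi : ℂ) / (2 * (a : ℂ))) * v ^ 2)

open Complex ComplexConjugate
open scoped Real

lemma ofReal_cpow_one_half {x : ℝ} (hx : 0 ≤ x) : (x : ℂ) ^ (1 / 2 : ℂ) = √x := by
  rw [Real.sqrt_eq_rpow, ofReal_cpow hx]
  norm_num

lemma jacobiTheta₂_term_eq_cexp_mul_cexp (n : ℤ) (z τ : ℂ) :
    jacobiTheta₂_term n z τ = cexp (π * I * τ * n ^ 2) * cexp (2 * π * I * n * z) := by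
  rw [jacobiTheta₂_term, ← exp_add]
  ring_nf

lemma summable_rexp_neg_mul_sq_add_mul_add {c : ℝ} (hc : 0 < c) (p q : ℝ) :
    Summable fun n : ℤ => Real.exp (-c * n ^ 2 + p * n + q) := by
  have him : 0 < (I * (c / π : ℝ)).im := by simpa using div_pos hc Real.pi_pos
  refine (((summable_jacobiTheta₂_term_iff (I * (-p / (2 * π) : ℝ)) _).mpr him).norm.mul_left
    (Real.exp q)).congr fun n => ?_
  rw [norm_jacobiTheta₂_term, ← Real.exp_add]
  simp only [mul_im, I_re, I_im, ofReal_re, ofReal_im, zero_mul, one_mul, zero_add]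
  field_simp
  ring_nf

lemma summable_rexp_neg_mul_add_sq {c : ℝ} (hc : 0 < c) (x : ℝ) :
    Summable fun n : ℤ => Real.exp (-c * (n + x) ^ 2) :=
  (summable_rexp_neg_mul_sq_add_mul_add hc (-2 * c * x) (-c * x ^ 2)).congr fun n => by ring_nf

lemma norm_cexp_neg_div_mul_add_sq (A : ℝ) (w : ℂ) (m : ℤ) :
    ‖cexp (-π / A * (m + w) ^ 2)‖ =
      Real.exp (π / A * w.im ^ 2) * Real.exp (-π / A * (m + w.re) ^ 2) := by
  rw [norm_exp, ← Real.exp_add, ← ofReal_neg, ← ofReal_div, re_ofReal_mul]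
  simp only [sq, mul_re, add_re, add_im, intCast_re, intCast_im]
  ring_nf

lemma tsum_cexp_neg_div_mul_add_sq {A : ℂ} (hA : 0 < A.re) (w : ℂ) :
    ∑' m : ℤ, cexp (-π / A * (m + w) ^ 2) = A ^ (1 / 2 : ℂ) * jacobiTheta₂ (-w) (I * A) := by
  have hA₀ : A ^ (1 / 2 : ℂ) ≠ 0 := by
    rw [Ne, cpow_eq_zero_iff]
    exact fun h => hA.ne' (by rw [h.1, zero_re])
  have h := Complex.tsum_exp_neg_quadratic hA (-I * w)
  rw [show I * (-I * w) = w by rw [← mul_assoc, mul_neg, I_mul_I, neg_neg, one_mul]] at h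
  have hθ : jacobiTheta₂ (-w) (I * A) = ∑' n : ℤ, cexp (-π * A * n ^ 2 + 2 * π * (-I * w) * n) := by
    refine tsum_congr fun n => congrArg cexp ?_
    ring_nf
    rw [I_sq]
    ring
  rw [hθ, h, ← mul_assoc, mul_one_div_cancel hA₀, one_mul]

lemma tsum_rexp_neg_div_mul_add_sq_le {A : ℝ} (hA : 0 < A) (x : ℝ) :
    ∑' m : ℤ, Real.exp (-π / A * (m + x) ^ 2) ≤
      √A * ∑' k : ℤ, ‖jacobiTheta₂_term k 0 (I * A)‖ := by
  have hIA : 0 < (I * A).im := by simpa using hA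
  have hterm (k : ℤ) : ‖jacobiTheta₂_term k (-x) (I * A)‖ = ‖jacobiTheta₂_term k 0 (I * A)‖ := by
    simp [norm_jacobiTheta₂_term]
  have hsqrt : ‖(A : ℂ) ^ (1 / 2 : ℂ)‖ = √A := by
    rw [ofReal_cpow_one_half hA.le, norm_real, Real.norm_of_nonneg (Real.sqrt_nonneg _)]
  calc ∑' m : ℤ, Real.exp (-π / A * (m + x) ^ 2)
      = ‖∑' m : ℤ, cexp (-π / A * (m + x) ^ 2)‖ := by
        simp_rw [← ofReal_intCast, ← ofReal_add, ← ofReal_pow, ← ofReal_neg, ← ofReal_div,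
          ← ofReal_mul, ← ofReal_exp, ← ofReal_tsum, norm_real]
        exact (Real.norm_of_nonneg (tsum_nonneg fun _ => (Real.exp_pos _).le)).symm
      _ = √A * ‖jacobiTheta₂ (-x) (I * A)‖ := by
        rw [tsum_cexp_neg_div_mul_add_sq (by simpa using hA), norm_mul, hsqrt]
      _ ≤ √A * ∑' k : ℤ, ‖jacobiTheta₂_term k 0 (I * A)‖ := by
        gcongr
        simp_rw [← hterm]
        exact norm_tsum_le_tsum_norm ((summable_jacobiTheta₂_term_iff _ _).mpr hIA).norm

lemma tsum_tsum_mul_neg_add {G R : Type*} [AddCommGroup G] [NormedRing R] [CompleteSpace R]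
    {F H : G → R} (hF : Summable fun k => ‖F k‖) (hH : Summable fun l => ‖H l‖) :
    ∑' n, ∑' k, F (-k) * H (n + k) = (∑' k, F k) * ∑' l, H l := by
  let e : G × G ≃ G × G :=
    { toFun := fun q => (-q.2, q.1 + q.2)
      invFun := fun p => (p.2 + p.1, -p.1)
      left_inv := fun q => Prod.ext (add_neg_cancel_right _ _) (neg_neg _)
      right_inv := fun p => Prod.ext (neg_neg _) (add_neg_cancel_right _ _) }
  have hsum : Summable ((fun p : G × G => F p.1 * H p.2) ∘ e) :=
    e.summable_iff.mpr (summable_mul_of_summable_norm hF hH)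
  rw [tsum_mul_tsum_of_summable_norm hF hH, ← e.tsum_eq]
  exact hsum.tsum_prod.symm

section DoubleTheta

variable {a : ℝ} {τ : ℂ} (u v : ℂ)

lemma eq_conj_add_of_im_eq (hτ : τ.im = a) : τ = conj τ + 2 * a * I := by
  rw [← sub_eq_iff_eq_add', sub_conj, hτ]
  push_cast
  ring

lemma doubleThetaTerm_eq_cexp_mul_cexp (ha : a ≠ 0) (hτ : τ.im = a) (m n : ℤ) :
    doubleThetaTerm a τ u v m n =
      cexp (-π / (2 * a : ℝ) * (m + (n * conj τ + u - v)) ^ 2) *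
        cexp (-π * I * conj τ * n ^ 2 + 2 * π * I * n * v) := by
  simp only [doubleThetaTerm, ← exp_add]
  rw [exp_eq_exp_iff_exists_int]
  refine ⟨-(m * n), ?_⟩
  have ha' : (a : ℂ) ≠ 0 := ofReal_ne_zero.mpr ha
  -- `conj τ` is generalized first so that substituting for `τ` leaves it alone
  obtain ⟨σ, hσ, rfl⟩ : ∃ σ, conj τ = σ ∧ τ = σ + 2 * a * I := ⟨_, rfl, eq_conj_add_of_im_eq hτ⟩
  rw [hσ]
  field_simp
  push_cast
  ring_nf

lemma jacobiTheta₂_term_mul_cexp (hτ : τ.im = a) (n k : ℤ) :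
    jacobiTheta₂_term k (-(n * conj τ + u - v)) (I * (2 * a : ℝ)) *
        cexp (-π * I * conj τ * n ^ 2 + 2 * π * I * n * v) =
      jacobiTheta₂_term (-k) u τ * jacobiTheta₂_term (n + k) v (-conj τ) := by
  simp only [jacobiTheta₂_term, ← exp_add]
  obtain ⟨σ, hσ, rfl⟩ : ∃ σ, conj τ = σ ∧ τ = σ + 2 * a * I := ⟨_, rfl, eq_conj_add_of_im_eq hτ⟩
  rw [hσ]
  congr 1
  push_cast
  ring_nf

lemma tsum_doubleThetaTerm_fiber (ha : 0 < a) (hτ : τ.im = a) (n : ℤ) :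
    ∑' m : ℤ, doubleThetaTerm a τ u v m n =
      √(2 * a) * ∑' k : ℤ, jacobiTheta₂_term (-k) u τ * jacobiTheta₂_term (n + k) v (-conj τ) := by
  have h2a : 0 < ((2 * a : ℝ) : ℂ).re := by rw [ofReal_re]; positivity
  simp_rw [doubleThetaTerm_eq_cexp_mul_cexp u v ha.ne' hτ, tsum_mul_right]
  rw [tsum_cexp_neg_div_mul_add_sq h2a, ofReal_cpow_one_half (by positivity), mul_assoc,
    jacobiTheta₂, ← tsum_mul_right]
  simp_rw [jacobiTheta₂_term_mul_cexp u v hτ]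

lemma norm_doubleThetaTerm (ha : a ≠ 0) (hτ : τ.im = a) (m n : ℤ) :
    ‖doubleThetaTerm a τ u v m n‖ =
      Real.exp (-(π * a / 2) * n ^ 2 - π * (u.im + v.im) * n + π / (2 * a) * (u.im - v.im) ^ 2) *
        Real.exp (-π / (2 * a) * (m + (n * τ.re + (u - v).re)) ^ 2) := by
  have hre : (n * conj τ + u - v).re = n * τ.re + (u - v).re := by
    simp only [sub_re, add_re, mul_re, intCast_re, intCast_im, conj_re, conj_im]
    ring
  have him : (n * conj τ + u - v).im = -a * n + (u.im - v.im) := by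
    simp only [sub_im, add_im, mul_im, intCast_re, intCast_im, conj_re, conj_im, hτ]
    ring
  have hL : (-π * I * conj τ * n ^ 2 + 2 * π * I * n * v).re =
      -π * a * n ^ 2 - 2 * π * n * v.im := by
    simp only [sq, add_re, neg_re, mul_re, mul_im, neg_im, ofReal_re, ofReal_im, I_re, I_im,
      conj_re, conj_im, intCast_re, intCast_im, re_ofNat, im_ofNat, hτ]
    ring
  rw [doubleThetaTerm_eq_cexp_mul_cexp u v ha hτ, norm_mul, norm_cexp_neg_div_mul_add_sq, norm_exp,
    mul_right_comm, ← Real.exp_add, hre, him, hL]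
  congr 2
  field_simp
  ring

lemma summable_norm_doubleThetaTerm (ha : 0 < a) (hτ : τ.im = a) :
    Summable fun p : ℤ × ℤ => ‖doubleThetaTerm a τ u v p.1 p.2‖ := by
  set K := √(2 * a) * ∑' k : ℤ, ‖jacobiTheta₂_term k 0 (I * (2 * a : ℝ))‖
  have hc : 0 < π / (2 * a) := by positivity
  have hfiber (n : ℤ) : Summable fun m : ℤ => ‖doubleThetaTerm a τ u v m n‖ := by
    simp_rw [norm_doubleThetaTerm u v ha.ne' hτ, neg_div]
    exact (summable_rexp_neg_mul_add_sq hc _).mul_left _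
  have hbound (n : ℤ) : ∑' m : ℤ, ‖doubleThetaTerm a τ u v m n‖ ≤
      Real.exp (-(π * a / 2) * n ^ 2 - π * (u.im + v.im) * n + π / (2 * a) * (u.im - v.im) ^ 2) *
        K := by
    simp_rw [norm_doubleThetaTerm u v ha.ne' hτ, tsum_mul_left]
    gcongr
    exact tsum_rexp_neg_div_mul_add_sq_le (by positivity) _
  refine Summable.prod_symm (f := fun q : ℤ × ℤ => ‖doubleThetaTerm a τ u v q.2 q.1‖) <|
    (summable_prod_of_nonneg fun _ => norm_nonneg _).mpr ⟨hfiber, ?_⟩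
  have hc' : 0 < π * a / 2 := by positivity
  refine ((summable_rexp_neg_mul_sq_add_mul_add hc' (-π * (u.im + v.im))
    (π / (2 * a) * (u.im - v.im) ^ 2)).mul_right K).of_nonneg_of_le
    (fun n => tsum_nonneg fun _ => norm_nonneg _) fun n => (hbound n).trans_eq ?_
  ring_nf

lemma tsum_doubleThetaTerm (ha : 0 < a) (hτ : τ.im = a) :
    ∑' p : ℤ × ℤ, doubleThetaTerm a τ u v p.1 p.2 =
      √(2 * a) * jacobiTheta₂ u τ * jacobiTheta₂ v (-conj τ) := by
  have hsum : Summable (Function.uncurry (doubleThetaTerm a τ u v)) :=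
    (summable_norm_doubleThetaTerm u v ha hτ).of_norm
  have hF : Summable fun k => ‖jacobiTheta₂_term k u τ‖ :=
    ((summable_jacobiTheta₂_term_iff u τ).mpr (hτ ▸ ha)).norm
  have hH : Summable fun l => ‖jacobiTheta₂_term l v (-conj τ)‖ :=
    ((summable_jacobiTheta₂_term_iff v _).mpr (by simpa [hτ] using ha)).norm
  refine hsum.tsum_prod.trans (hsum.tsum_comm.symm.trans ?_)
  simp_rw [tsum_doubleThetaTerm_fiber u v ha hτ, tsum_mul_left, tsum_tsum_mul_neg_add hF hH,
    jacobiTheta₂, mul_assoc]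

end DoubleTheta

/-- the theta identity relating the Gaussian double sum on the
doubling torus to `√(2a)·ϑ(u;τ)·ϑ(v;-τ̄)`, all series converging absolutely. -/
theorem double_theta_identity
    (a b : ℝ) (ha : 0 < a) (τ : ℂ) (hτ : τ = (b : ℂ) + (a : ℂ) * Complex.I)
    (u v : ℂ) :
    Summable (fun p : ℤ × ℤ => doubleThetaTerm a τ u v p.1 p.2) ∧
    Summable (fun k : ℤ => Complex.exp (Real.pi * Complex.I * τ * (k : ℂ) ^ 2) *
      Complex.exp (2 * Real.pi * Complex.I * (k : ℂ) * u)) ∧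
    Summable (fun l : ℤ =>
      Complex.exp (-(Real.pi * Complex.I * (starRingEnd ℂ) τ * (l : ℂ) ^ 2)) *
        Complex.exp (2 * Real.pi * Complex.I * (l : ℂ) * v)) ∧
    (∑' p : ℤ × ℤ, doubleThetaTerm a τ u v p.1 p.2)
      = (Real.sqrt (2 * a) : ℂ) *
        (∑' k : ℤ, Complex.exp (Real.pi * Complex.I * τ * (k : ℂ) ^ 2) *
          Complex.exp (2 * Real.pi * Complex.I * (k : ℂ) * u)) *
        (∑' l : ℤ,
          Complex.exp (-(Real.pi * Complex.I * (starRingEnd ℂ) τ * (l : ℂ) ^ 2)) *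
            Complex.exp (2 * Real.pi * Complex.I * (l : ℂ) * v)) := by
  have hτa : τ.im = a := by simp [hτ]
  have hF : (fun k : ℤ => cexp (π * I * τ * k ^ 2) * cexp (2 * π * I * k * u)) =
      (jacobiTheta₂_term · u τ) :=
    funext fun k => (jacobiTheta₂_term_eq_cexp_mul_cexp k u τ).symm
  have hH : (fun l : ℤ => cexp (-(π * I * conj τ * l ^ 2)) * cexp (2 * π * I * l * v)) =
      (jacobiTheta₂_term · v (-conj τ)) :=
    funext fun l => by rw [jacobiTheta₂_term_eq_cexp_mul_cexp, mul_neg, neg_mul]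
  rw [hF, hH, summable_jacobiTheta₂_term_iff, summable_jacobiTheta₂_term_iff]
  exact ⟨(summable_norm_doubleThetaTerm u v ha hτa).of_norm, hτa ▸ ha, by simpa [hτa] using ha,
    tsum_doubleThetaTerm u v ha hτa⟩
end
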